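/- Let u ∈ H¹(ℝ²) (or with u ∈ \dot H¹₀) satisfy the antisymmetry u(x₁, x₂) = −u(x₁, −x₂) for all (x₁,x₂). Then there is a constant C (independent of u) such that ∫_{ℝ²} |u(x)|²/|x|² dx ≤ C ∫_{ℝ²} |∇u(x)|² dx. -/

import Mathlib

/-!
The antisymmetry forces `u` to vanish on the axis `x₂ = 0`, and `|x₂| ≤ ‖x‖`, so it suffices to
bound `∫ (u x / x₂)²`. By Fubini this is the one-dimensional Hardy inequality
`∫ (g t / t)² ≤ 4 ∫ g'²`, for `C¹` functions `g` with compact support and `g 0 = 0`, applied on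
every vertical line. On a half-line, integrating the derivative of `g² / t` gives
`∫ (g / t)² = 2 ∫ (g / t) g'`, and `2 (g / t) g' ≤ (g / t)² / 2 + 2 g'²` then yields the constant 4.
-/

open MeasureTheory Set Filter Topology

theorem HasCompactSupport.integrable_of_bound {X E : Type*} [TopologicalSpace X]
    [MeasurableSpace X] {μ : Measure X} [IsFiniteMeasureOnCompacts μ] [NormedAddCommGroup E]
    {f : X → E} (hf : HasCompactSupport f) (hm : AEStronglyMeasurable f μ) {C : ℝ}
    (hC : ∀ x, ‖f x‖ ≤ C) : Integrable f μ :=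
  (Measure.integrableOn_of_bounded hf.isCompact.measure_lt_top.ne hm
    (ae_of_all _ hC)).integrable_of_forall_notMem_eq_zero
    fun _ hx => image_eq_zero_of_notMem_tsupport hx

theorem HasCompactSupport.comp_prodMk {X Y M : Type*} [TopologicalSpace X] [TopologicalSpace Y]
    [R1Space Y] [Zero M] {f : X × Y → M} (hf : HasCompactSupport f) (a : X) :
    HasCompactSupport fun b => f (a, b) :=
  .intro (hf.image continuous_snd) fun b hb =>
    image_eq_zero_of_notMem_tsupport fun h => hb ⟨(a, b), h, rfl⟩

theorem integral_eq_integral_Ioi_add_integral_Ioi_comp_neg {E : Type*} [NormedAddCommGroup E]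
    [NormedSpace ℝ E] {f : ℝ → E} (hf : Integrable f) :
    ∫ t, f t = (∫ t in Ioi 0, f t) + ∫ t in Ioi 0, f (-t) := by
  rw [integral_comp_neg_Ioi, neg_zero, add_comm,
    intervalIntegral.integral_Iic_add_Ioi hf.integrableOn hf.integrableOn]

theorem LipschitzWith.abs_div_self_le {g : ℝ → ℝ} {L : NNReal} (hg : LipschitzWith L g)
    (h0 : g 0 = 0) (t : ℝ) : |g t / t| ≤ L := by
  rcases eq_or_ne t 0 with rfl | ht
  · simp
  · rw [abs_div, div_le_iff₀ (abs_pos.2 ht)]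
    simpa [Real.dist_eq, h0] using hg.dist_le_mul t 0

section Line

variable {g : ℝ → ℝ}

theorem integrable_div_self_sq (hg : ContDiff ℝ 1 g) (hs : HasCompactSupport g) (h0 : g 0 = 0) :
    Integrable fun t => (g t / t) ^ 2 := by
  obtain ⟨L, hL⟩ := hg.lipschitzWith_of_hasCompactSupport hs one_ne_zero
  refine HasCompactSupport.integrable_of_bound (C := (L : ℝ) ^ 2)
    (hs.mono fun t => mt fun h => by simp [h])
    ((hg.continuous.measurable.div measurable_id).pow_const 2).aestronglyMeasurable fun t => ?_
  rw [norm_pow, Real.norm_eq_abs]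
  gcongr
  exact hL.abs_div_self_le h0 t

theorem integrable_div_self_mul_deriv (hg : ContDiff ℝ 1 g) (hs : HasCompactSupport g)
    (h0 : g 0 = 0) : Integrable fun t => g t / t * deriv g t := by
  obtain ⟨L, hL⟩ := hg.lipschitzWith_of_hasCompactSupport hs one_ne_zero
  refine ((hg.continuous_deriv le_rfl).integrable_of_hasCompactSupport hs.deriv).bdd_mul
    (c := L) (hg.continuous.measurable.div measurable_id).aestronglyMeasurable
    (ae_of_all _ (hL.abs_div_self_le h0))

theorem integrable_deriv_sq (hg : ContDiff ℝ 1 g) (hs : HasCompactSupport g) :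
    Integrable fun t => deriv g t ^ 2 := by
  apply Continuous.integrable_of_hasCompactSupport
  · exact (hg.continuous_deriv le_rfl).pow 2
  · exact hs.deriv.comp_left (g := fun y : ℝ => y ^ 2) (by simp)

theorem integral_Ioi_div_self_sq_eq (hg : ContDiff ℝ 1 g) (hs : HasCompactSupport g)
    (h0 : g 0 = 0) :
    ∫ t in Ioi 0, (g t / t) ^ 2 = 2 * ∫ t in Ioi 0, g t / t * deriv g t := by
  obtain ⟨L, hL⟩ := hg.lipschitzWith_of_hasCompactSupport hs one_ne_zero
  -- `g² / t`, written as `g * (g / t)`: a vanishing factor times a bounded one near `0`.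
  have hderiv : ∀ t ∈ Ioi (0 : ℝ), HasDerivAt (fun t => g t * (g t / t))
      (2 * (g t / t * deriv g t) - (g t / t) ^ 2) t := by
    intro t ht
    have hgt := (hg.differentiable one_ne_zero t).hasDerivAt
    refine (hgt.fun_mul (hgt.fun_div (hasDerivAt_id' t) (ne_of_gt ht))).congr_deriv ?_
    field_simp
    ring
  have hbdd : IsBoundedUnder (· ≤ ·) (𝓝 0) ((‖·‖) ∘ fun t => g t / t) :=
    isBoundedUnder_of ⟨L, hL.abs_div_self_le h0⟩
  have hcont : ContinuousWithinAt (fun t => g t * (g t / t)) (Ici 0) 0 := by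
    refine ContinuousAt.continuousWithinAt ?_
    simpa [ContinuousAt, h0] using
      (h0 ▸ hg.continuous.tendsto 0).zero_mul_isBoundedUnder_le hbdd
  have htop : Tendsto (fun t => g t * (g t / t)) atTop (𝓝 0) :=
    (hs.mul_right (f' := fun t => g t / t)).is_zero_at_infty.mono_left atTop_le_cocompact
  have hmul := ((integrable_div_self_mul_deriv hg hs h0).const_mul 2).integrableOn (s := Ioi 0)
  have hsq := (integrable_div_self_sq hg hs h0).integrableOn (s := Ioi 0)
  have hFTC := integral_Ioi_of_hasDerivAt_of_tendsto hcont hderiv (hmul.sub hsq) htop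
  rw [integral_sub hmul hsq, integral_const_mul, h0, zero_mul, sub_zero] at hFTC
  linarith

theorem hardy_inequality_Ioi (hg : ContDiff ℝ 1 g) (hs : HasCompactSupport g) (h0 : g 0 = 0) :
    ∫ t in Ioi 0, (g t / t) ^ 2 ≤ 4 * ∫ t in Ioi 0, deriv g t ^ 2 := by
  have hq := (integrable_div_self_sq hg hs h0).integrableOn (s := Ioi 0)
  have hd := (integrable_deriv_sq hg hs).integrableOn (s := Ioi 0)
  have hamgm : 2 * ∫ t in Ioi 0, g t / t * deriv g t
      ≤ ∫ t in Ioi 0, ((g t / t) ^ 2 / 2 + 2 * deriv g t ^ 2) := by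
    rw [← integral_const_mul]
    refine setIntegral_mono_on ((integrable_div_self_mul_deriv hg hs h0).const_mul 2).integrableOn
      ((hq.div_const 2).add (hd.const_mul 2)) measurableSet_Ioi fun t _ => ?_
    nlinarith [sq_nonneg (g t / t - 2 * deriv g t)]
  rw [integral_add (hq.div_const 2) (hd.const_mul 2), integral_div, integral_const_mul,
    ← integral_Ioi_div_self_sq_eq hg hs h0] at hamgm
  linarith

theorem hardy_inequality_real (hg : ContDiff ℝ 1 g) (hs : HasCompactSupport g) (h0 : g 0 = 0) :
    ∫ t, (g t / t) ^ 2 ≤ 4 * ∫ t, deriv g t ^ 2 := by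
  have h_right := hardy_inequality_Ioi hg hs h0
  have h_left := hardy_inequality_Ioi (hg.comp contDiff_neg)
    (hs.comp_homeomorph (Homeomorph.neg ℝ)) (by simpa using h0)
  simp only [Function.comp_def, deriv_comp_neg, neg_sq] at h_left
  rw [integral_eq_integral_Ioi_add_integral_Ioi_comp_neg (integrable_div_self_sq hg hs h0),
    integral_eq_integral_Ioi_add_integral_Ioi_comp_neg (integrable_deriv_sq hg hs)]
  simp only [div_neg, neg_sq]
  linarith

end Line

section Plane

variable {E : Type*} [NormedAddCommGroup E]

theorem LipschitzWith.abs_div_snd_le {u : E × ℝ → ℝ} {L : NNReal} (hu : LipschitzWith L u)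
    (h0 : ∀ a, u (a, 0) = 0) (x : E × ℝ) : |u x / x.2| ≤ L := by
  simpa using (hu.comp (LipschitzWith.prodMk_left x.1)).abs_div_self_le (h0 x.1) x.2

theorem sq_div_norm_sq_le_sq_div_snd {u : E × ℝ → ℝ} (h0 : ∀ a, u (a, 0) = 0) (x : E × ℝ) :
    u x ^ 2 / ‖x‖ ^ 2 ≤ (u x / x.2) ^ 2 := by
  obtain ⟨a, b⟩ := x
  rcases eq_or_ne b 0 with rfl | hb
  · simp [h0]
  · rw [div_pow, ← sq_abs b]
    gcongr
    exact norm_snd_le (a, b)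

theorem integrable_sq_div_snd [NormedSpace ℝ E] [MeasurableSpace E]
    [OpensMeasurableSpace (E × ℝ)] {μ : Measure (E × ℝ)} [IsFiniteMeasureOnCompacts μ]
    {u : E × ℝ → ℝ} (hu : ContDiff ℝ 1 u) (hs : HasCompactSupport u) (h0 : ∀ a, u (a, 0) = 0) :
    Integrable (fun x => (u x / x.2) ^ 2) μ := by
  obtain ⟨L, hL⟩ := hu.lipschitzWith_of_hasCompactSupport hs one_ne_zero
  refine HasCompactSupport.integrable_of_bound (C := (L : ℝ) ^ 2)
    (hs.mono fun x => mt fun h => by simp [h])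
    ((hu.continuous.measurable.div measurable_snd).pow_const 2).aestronglyMeasurable fun x => ?_
  rw [norm_pow, Real.norm_eq_abs]
  gcongr
  exact hL.abs_div_snd_le h0 x

theorem norm_deriv_comp_prodMk_le [NormedSpace ℝ E] {F : Type*} [NormedAddCommGroup F]
    [NormedSpace ℝ F] {u : E × ℝ → F} {a : E} {b : ℝ} (hu : DifferentiableAt ℝ u (a, b)) :
    ‖deriv (fun y => u (a, y)) b‖ ≤ ‖fderiv ℝ u (a, b)‖ := by
  have hslice : HasDerivAt (fun y => u (a, y)) (fderiv ℝ u (a, b) (0, 1)) b :=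
    hu.hasFDerivAt.comp_hasDerivAt b ((hasDerivAt_const b a).prodMk (hasDerivAt_id b))
  rw [hslice.deriv]
  simpa using (fderiv ℝ u (a, b)).le_opNorm (0, 1)

theorem hardy_inequality_slice [NormedSpace ℝ E] {u : E × ℝ → ℝ} (hu : ContDiff ℝ 1 u)
    (hs : HasCompactSupport u) (h0 : ∀ a, u (a, 0) = 0) (a : E) :
    ∫ b, (u (a, b) / b) ^ 2 ≤ 4 * ∫ b, ‖fderiv ℝ u (a, b)‖ ^ 2 := by
  have hslice : ContDiff ℝ 1 fun b => u (a, b) := hu.comp (contDiff_const.prodMk contDiff_id)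
  have hint : Integrable fun b => ‖fderiv ℝ u (a, b)‖ ^ 2 := by
    apply Continuous.integrable_of_hasCompactSupport
    · exact ((hu.continuous_fderiv one_ne_zero).comp (Continuous.prodMk_right a)).norm.pow 2
    · exact ((hs.fderiv ℝ).comp_prodMk a).comp_left (g := fun y => ‖y‖ ^ 2) (by simp)
  refine (hardy_inequality_real hslice (hs.comp_prodMk a) (h0 a)).trans ?_
  refine mul_le_mul_of_nonneg_left (integral_mono_of_nonneg (ae_of_all _ fun b => sq_nonneg _)
    hint (ae_of_all _ fun b => ?_)) zero_le_four
  simpa [sq_abs] using pow_le_pow_left₀ (norm_nonneg _)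
    (norm_deriv_comp_prodMk_le ((hu.differentiable one_ne_zero) (a, b))) 2

end Plane

/-- Hardy inequality on the plane for functions odd in the second variable:
there is a constant `C` such that `∫ |u|²/|x|² ≤ C ∫ |∇u|²` for every
compactly supported `C¹` function `u` with `u(x₁,x₂) = -u(x₁,-x₂)`. -/
theorem hardy_inequality_odd :
    ∃ C : ℝ, 0 < C ∧
      ∀ u : ℝ × ℝ → ℝ, ContDiff ℝ 1 u → HasCompactSupport u →
        (∀ x : ℝ × ℝ, u (x.1, x.2) = -u (x.1, -x.2)) →
        ∫ x : ℝ × ℝ, u x ^ 2 / ‖x‖ ^ 2 ≤ C * ∫ x : ℝ × ℝ, ‖fderiv ℝ u x‖ ^ 2 := by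
  refine ⟨4, by norm_num, fun u hu hs hodd => ?_⟩
  have h0 (a : ℝ) : u (a, 0) = 0 := self_eq_neg.mp (by simpa using hodd (a, 0))
  have hq : Integrable fun x : ℝ × ℝ => (u x / x.2) ^ 2 := integrable_sq_div_snd hu hs h0
  have hD : Integrable fun x : ℝ × ℝ => ‖fderiv ℝ u x‖ ^ 2 := by
    apply Continuous.integrable_of_hasCompactSupport
    · exact (hu.continuous_fderiv one_ne_zero).norm.pow 2
    · exact (hs.fderiv ℝ).comp_left (g := fun y => ‖y‖ ^ 2) (by simp)
  calc ∫ x, u x ^ 2 / ‖x‖ ^ 2 ≤ ∫ x : ℝ × ℝ, (u x / x.2) ^ 2 :=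
        integral_mono_of_nonneg (ae_of_all _ fun x => by positivity) hq
          (ae_of_all _ (sq_div_norm_sq_le_sq_div_snd h0))
    _ = ∫ a, ∫ b, (u (a, b) / b) ^ 2 := integral_prod _ hq
    _ ≤ ∫ a, 4 * ∫ b, ‖fderiv ℝ u (a, b)‖ ^ 2 :=
        integral_mono_of_nonneg (ae_of_all _ fun a => integral_nonneg fun b => sq_nonneg _)
          (hD.integral_prod_left.const_mul 4) (ae_of_all _ (hardy_inequality_slice hu hs h0))
    _ = 4 * ∫ x, ‖fderiv ℝ u x‖ ^ 2 := by
        rw [integral_const_mul, ← integral_prod _ hD, ← Measure.volume_eq_prod]
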